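/- arXiv:1811.05394 — 4 statements merged into one kernel-verified Lean document; each statement's English description precedes it below -/
import Mathlib

section
/- Let λ_n, λ_m, λ_nm ≥ 0 be real arrival rates, let 0 ≤ r_N ≤ r_M be real red durations, and let α ∈ [0,1]. Define the joint law of the pair (N, M) of queue lengths on ℕ × ℕ by the following probabilistic program: sample four independent counts X ~ Poisson(r_N·λ_n), Y ~ Poisson(r_M·λ_m), K₁ ~ Poisson(r_N·λ_nm), K₂ ~ Poisson((r_M − r_N)·λ_nm); then, given K₁ and K₂, sample independently S₁ ~ Binomial(K₁, α) and S₂ ~ Binomial(K₂, α); and return N = X + (K₁ − S₁) and M = Y + S₁ + S₂. Then for all n, m ∈ ℕ, P(N = n, M = m) = (μ_N^n e^{−μ_N}/n!) · (μ_M^m e^{−μ_M}/m!), where μ_N := r_N·(λ_n + (1−α)·λ_nm) and μ_M := r_M·(λ_m + α·λ_nm). In particular N and M are independent Poisson random variables with means μ_N and μ_M. -/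
/-! If `K ~ Poisson(μ)` and, given `K`, `S ~ Binomial(K, α)`, then `K - S` and `S` are
independent Poisson variables with means `(1 - α) μ` and `α μ` (thinning); a sum of independent
Poisson variables is Poisson with the summed mean (superposition). Thinning `(K₁, S₁)` and
`(K₂, S₂)` writes `N` and `M` as sums over two disjoint groups of five independent Poisson
variables, so they are independent Poisson variables whose means are the sums of the rates. -/

open ProbabilityTheory
open scoped ENNReal NNReal

set_option linter.deprecated false

open Real Finset Finset.HasAntidiagonal
open scoped Nat

theorem sum_antidiagonal_mul_exp_pow_div_factorial (x y : ℝ) (n : ℕ) :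
    ∑ p ∈ antidiagonal n, (exp (-x) * x ^ p.1 / p.1 !) * (exp (-y) * y ^ p.2 / p.2 !) =
      exp (-(x + y)) * (x + y) ^ n / n ! := by
  rw [(Commute.all x y).add_pow', Finset.mul_sum, Finset.sum_div]
  refine Finset.sum_congr rfl fun p hp => ?_
  rw [← mem_antidiagonal.mp hp, nsmul_eq_mul, Nat.cast_add_choose, neg_add, exp_add]
  field_simp

theorem exp_pow_div_factorial_mul_binomial (α μ : ℝ) (a b : ℕ) :
    (exp (-μ) * μ ^ (a + b) / (a + b)!) * ((a + b).choose b * α ^ b * (1 - α) ^ a) =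
      (exp (-((1 - α) * μ)) * ((1 - α) * μ) ^ a / a !) *
        (exp (-(α * μ)) * (α * μ) ^ b / b !) := by
  have hexp : exp (-μ) = exp (-((1 - α) * μ)) * exp (-(α * μ)) := by
    rw [← exp_add]; ring_nf
  rw [← Nat.choose_symm_add, Nat.cast_add_choose, hexp, mul_pow, mul_pow]
  field_simp
  ring

namespace PMF

theorem bind_bind_pure_prod_apply {α β : Type*} (p : PMF α) (q : PMF β) (a : α) (b : β) :
    (p.bind fun x => q.bind fun y => pure (x, y)) (a, b) = p a * q b := by
  simp only [bind_apply, pure_apply, mul_ite, mul_one, mul_zero]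
  rw [tsum_eq_single a fun x hx => by simp [Ne.symm hx],
    tsum_eq_single b fun y hy => by simp [Ne.symm hy], if_pos rfl]

theorem bind_bind_pure_add_apply {M : Type*} [AddMonoid M] [HasAntidiagonal M]
    (p q : PMF M) (n : M) :
    (p.bind fun x => q.bind fun y => pure (x + y)) n = ∑ z ∈ antidiagonal n, p z.1 * q z.2 := by
  simp only [bind_apply, pure_apply, ← ENNReal.tsum_mul_left, mul_ite, mul_one, mul_zero]
  rw [← ENNReal.tsum_prod, tsum_eq_sum (s := antidiagonal n)]
  · refine Finset.sum_congr rfl fun z hz => ?_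
    rw [if_pos (mem_antidiagonal.mp hz).symm]
  · intro z hz
    rw [if_neg fun h => hz (mem_antidiagonal.mpr h.symm)]

end PMF

theorem poissonPMF_apply (r : ℝ≥0) (n : ℕ) :
    poissonPMF r n = ENNReal.ofReal (exp (-r) * r ^ n / n !) := rfl

theorem poissonPMF_bind_add (μ₁ μ₂ : ℝ≥0) :
    ((poissonPMF μ₁).bind fun a => (poissonPMF μ₂).bind fun b => PMF.pure (a + b)) =
      poissonPMF (μ₁ + μ₂) := by
  ext n
  rw [PMF.bind_bind_pure_add_apply, poissonPMF_apply, NNReal.coe_add,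
    ← sum_antidiagonal_mul_exp_pow_div_factorial,
    ENNReal.ofReal_sum_of_nonneg fun _ _ => by positivity]
  refine Finset.sum_congr rfl fun z _ => ?_
  rw [poissonPMF_apply, poissonPMF_apply, ENNReal.ofReal_mul (by positivity)]

theorem poissonPMF_bind_add_bind {γ : Type*} (μ₁ μ₂ : ℝ≥0) (f : ℕ → PMF γ) :
    ((poissonPMF μ₁).bind fun a => (poissonPMF μ₂).bind fun b => f (a + b)) =
      (poissonPMF (μ₁ + μ₂)).bind f := by
  simp only [← poissonPMF_bind_add, PMF.bind_bind, PMF.pure_bind]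

theorem poissonPMF_bind_binomial (α : ℝ≥0) (hα : α ≤ 1) (μ : ℝ≥0) :
    ((poissonPMF μ).bind fun k => (PMF.binomial α hα k).bind fun s => PMF.pure (k - s, s)) =
      (poissonPMF ((1 - α) * μ)).bind fun a => (poissonPMF (α * μ)).bind fun b =>
        PMF.pure (a, b) := by
  ext ⟨a, b⟩
  have hb : b % (a + b + 1) = b := Nat.mod_eq_of_lt (by omega)
  rw [PMF.bind_bind_pure_prod_apply, PMF.bind_apply, tsum_eq_single (a + b), PMF.bind_apply,
    tsum_eq_single (Fin.ofNat _ b), PMF.pure_apply, if_pos (by simp [hb]), mul_one,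
    ← PMF.binomial_apply_of_le (by omega), poissonPMF_apply, poissonPMF_apply, poissonPMF_apply,
    ← ENNReal.ofReal_mul (by positivity), ← ENNReal.ofReal_mul (by positivity)]
  · push_cast [NNReal.coe_sub hα]
    rw [Nat.add_sub_cancel, exp_pow_div_factorial_mul_binomial]
  · intro s hs
    refine mul_eq_zero_of_right _ (PMF.pure_apply_of_ne _ _ fun h => hs (Fin.ext ?_))
    rw [Fin.val_ofNat, hb]
    exact (congrArg Prod.snd h).symm
  · intro k hk
    refine mul_eq_zero_of_right _ (ENNReal.tsum_eq_zero.mpr fun s => ?_)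
    refine mul_eq_zero_of_right _ (PMF.pure_apply_of_ne _ _ fun h => hk ?_)
    have := s.is_lt
    simp only [Prod.ext_iff] at h
    omega

theorem poissonPMF_bind_binomial_bind {γ : Type*} (α : ℝ≥0) (hα : α ≤ 1) (μ : ℝ≥0)
    (f : ℕ → ℕ → PMF γ) :
    ((poissonPMF μ).bind fun k => (PMF.binomial α hα k).bind fun s => f (k - s) s) =
      (poissonPMF ((1 - α) * μ)).bind fun a => (poissonPMF (α * μ)).bind fun b => f a b := by
  have h := congrArg (·.bind fun p : ℕ × ℕ => f p.1 p.2) (poissonPMF_bind_binomial α hα μ)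
  simpa only [PMF.bind_bind, PMF.pure_bind] using h

theorem poissonPMF_bind_binomial_bind_pair {γ : Type*} (α : ℝ≥0) (hα : α ≤ 1) (ν₁ ν₂ : ℝ≥0)
    (g : ℕ → ℕ → ℕ → PMF γ) :
    ((poissonPMF ν₁).bind fun k₁ => (poissonPMF ν₂).bind fun k₂ =>
        (PMF.binomial α hα k₁).bind fun s₁ => (PMF.binomial α hα k₂).bind fun s₂ =>
          g (k₁ - s₁) s₁ s₂) =
      (poissonPMF ((1 - α) * ν₁)).bind fun a => (poissonPMF (α * ν₁)).bind fun b =>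
        (poissonPMF (α * ν₂)).bind fun c => g a b c := by
  calc _ = (poissonPMF ν₁).bind fun k₁ => (PMF.binomial α hα k₁).bind fun s₁ =>
          (poissonPMF ν₂).bind fun k₂ => (PMF.binomial α hα k₂).bind fun s₂ =>
            g (k₁ - s₁) s₁ s₂ :=
        congrArg _ (funext fun _ => PMF.bind_comm _ _ _)
    _ = (poissonPMF ((1 - α) * ν₁)).bind fun a => (poissonPMF (α * ν₁)).bind fun b =>
          (poissonPMF ν₂).bind fun k₂ => (PMF.binomial α hα k₂).bind fun s₂ => g a b s₂ :=
        poissonPMF_bind_binomial_bind α hα ν₁ fun a b =>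
          (poissonPMF ν₂).bind fun k₂ => (PMF.binomial α hα k₂).bind fun s₂ => g a b s₂
    _ = _ := by
      refine congrArg _ (funext fun a => congrArg _ (funext fun b => ?_))
      rw [poissonPMF_bind_binomial_bind α hα ν₂ fun _ c => g a b c, PMF.bind_const]

theorem poissonPMF_bind_add_pair (a b c d e : ℝ≥0) :
    ((poissonPMF a).bind fun x => (poissonPMF b).bind fun y => (poissonPMF c).bind fun u =>
        (poissonPMF d).bind fun v => (poissonPMF e).bind fun w => PMF.pure (x + u, y + v + w)) =
      (poissonPMF (a + c)).bind fun s => (poissonPMF (b + d + e)).bind fun t =>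
        PMF.pure (s, t) := by
  calc _ = (poissonPMF a).bind fun x => (poissonPMF c).bind fun u =>
          (poissonPMF b).bind fun y => (poissonPMF d).bind fun v => (poissonPMF e).bind fun w =>
            PMF.pure (x + u, y + (v + w)) := by
        simp only [add_assoc]
        exact congrArg _ (funext fun _ => PMF.bind_comm _ _ _)
    _ = (poissonPMF a).bind fun x => (poissonPMF c).bind fun u =>
          (poissonPMF (b + (d + e))).bind fun t => PMF.pure (x + u, t) := by
        refine congrArg _ (funext fun x => congrArg _ (funext fun u => ?_))
        rw [← poissonPMF_bind_add_bind b (d + e)]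
        exact congrArg _ (funext fun y =>
          poissonPMF_bind_add_bind d e fun t => PMF.pure (x + u, y + t))
    _ = _ := by
        rw [← add_assoc]
        exact poissonPMF_bind_add_bind a c fun s =>
          (poissonPMF (b + d + e)).bind fun t => PMF.pure (s, t)

/-- Joint law of the two queue lengths `(N, M)` on a two-lane link: sample independent Poisson
counts `X ~ Poisson(r_N λ_n)`, `Y ~ Poisson(r_M λ_m)`, `K₁ ~ Poisson(r_N λ_nm)`,
`K₂ ~ Poisson((r_M − r_N) λ_nm)`, then `S₁ ~ Binomial(K₁, α)` and `S₂ ~ Binomial(K₂, α)`, and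
return `N = X + (K₁ − S₁)`, `M = Y + S₁ + S₂`.  Then `(N, M)` are independent Poisson random
variables with means `μ_N = r_N (λ_n + (1−α) λ_nm)` and `μ_M = r_M (λ_m + α λ_nm)`:
`P(N = n, M = m) = (μ_N^n e^{−μ_N}/n!) ⬝ (μ_M^m e^{−μ_M}/m!)`. -/
theorem two_lane_queue_lengths_joint_poisson
    (lam_n lam_m lam_nm : ℝ≥0) (rN rM : ℝ≥0) (hr : rN ≤ rM)
    (α : ℝ≥0) (hα : α ≤ 1) (n m : ℕ) :
    (((poissonPMF (rN * lam_n)).bind fun x =>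
        (poissonPMF (rM * lam_m)).bind fun y =>
          (poissonPMF (rN * lam_nm)).bind fun k1 =>
            (poissonPMF ((rM - rN) * lam_nm)).bind fun k2 =>
              (PMF.binomial α (by exact_mod_cast hα) k1).bind fun s1 =>
                (PMF.binomial α (by exact_mod_cast hα) k2).bind fun s2 =>
                  PMF.pure (x + (k1 - s1.val), y + s1.val + s2.val)) (n, m)) =
      ENNReal.ofReal
        ((((rN : ℝ) * ((lam_n : ℝ) + (1 - (α : ℝ)) * (lam_nm : ℝ))) ^ n *
            Real.exp (-((rN : ℝ) * ((lam_n : ℝ) + (1 - (α : ℝ)) * (lam_nm : ℝ)))) /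
              n.factorial) *
          (((rM : ℝ) * ((lam_m : ℝ) + (α : ℝ) * (lam_nm : ℝ))) ^ m *
            Real.exp (-((rM : ℝ) * ((lam_m : ℝ) + (α : ℝ) * (lam_nm : ℝ)))) /
              m.factorial)) := by
  have hN : rN * lam_n + (1 - α) * (rN * lam_nm) = rN * (lam_n + (1 - α) * lam_nm) := by ring
  have hM : rM * lam_m + α * (rN * lam_nm) + α * ((rM - rN) * lam_nm) =
      rM * (lam_m + α * lam_nm) := by
    rw [add_assoc, ← mul_add, ← add_mul, add_tsub_cancel_of_le hr]
    ring
  calc _ = ((poissonPMF (rN * (lam_n + (1 - α) * lam_nm))).bind fun s =>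
          (poissonPMF (rM * (lam_m + α * lam_nm))).bind fun t => PMF.pure (s, t)) (n, m) := by
        rw [← hN, ← hM, ← poissonPMF_bind_add_pair]
        congr 1
        refine congrArg _ (funext fun x => congrArg _ (funext fun y => ?_))
        exact poissonPMF_bind_binomial_bind_pair α hα _ _ fun a b c =>
          PMF.pure (x + a, y + b + c)
    _ = _ := by
        rw [PMF.bind_bind_pure_prod_apply, poissonPMF_apply, poissonPMF_apply,
          ← ENNReal.ofReal_mul (by positivity)]
        congr 1
        push_cast [NNReal.coe_sub hα]
        ring
end

section
/- Fix an integer n ≥ 2 and p ∈ (0,1). Let ℙ be the product measure on Ω = {0,1}^n in which the n coordinates are independent Bernoulli(p) random variables. For ω ∈ Ω define C(ω) := number of indices i with ω_i = 1 and L(ω) := the largest index i with ω_i = 1 (L(ω) := 0 if none). Then for every integer l with 2 ≤ l ≤ n, ∑_{c=1}^{l} ((c−1)/(l−1)) · ℙ(C = c and L = l) = p · ℙ(L = l). Equivalently, conditional on the event {L = l} with l ≥ 2, the estimator p̂ := (C−1)/(L−1) satisfies E[p̂ | L = l] = p, i.e., the estimator p̂ = (c_p − 1)/(l_p − 1) of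 the penetration ratio is unbiased. -/
/-!
Given `L = l`, the last probe sits at position `l`, the vehicles behind it are not probes and
the first `l - 1` vehicles are still independent Bernoulli(`p`), so `C - 1` is binomial with
parameters `l - 1` and `p`:
`ℙ(C = k + 1, L = l) = p (1 - p)^(n - l) b_{l-1,k}(p)` with `b` the Bernstein polynomials.
Unbiasedness is then the mean of the binomial law, `∑ k b_{m,k} = m X`.
-/

open MeasureTheory Finset Polynomial
open scoped NNReal

namespace ProbeQueue

section Counting

variable {ι : Type*} [Fintype ι]

def probes (ω : ι → Bool) : Finset ι := {i | ω i = true}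

theorem card_filter_probes [DecidableEq ι] (P : Finset ι → Prop) [DecidablePred P] :
    #{ω : ι → Bool | P (probes ω)} = #{S : Finset ι | P S} := by
  refine card_nbij' probes (fun S i => decide (i ∈ S)) ?_ ?_ ?_ ?_
  · intro ω hω; simpa using hω
  · intro S hS
    have : probes (fun i => decide (i ∈ S)) = S := by ext i; simp [probes]
    simpa [this] using hS
  · intro ω _; funext i; simp [probes]
  · intro S _; ext i; simp [probes]

variable {n : ℕ}

theorem sup_val_add_one_eq_iff {S : Finset (Fin n)} {i : Fin n} :
    S.sup (fun j => j.val + 1) = i.val + 1 ↔ i ∈ S ∧ S ⊆ Iic i := by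
  constructor
  · intro h
    obtain ⟨j, hj, hsup⟩ := exists_mem_eq_sup S
      (nonempty_iff_ne_empty.2 fun h0 => by simp [h0] at h) fun j : Fin n => j.val + 1
    have hji : j = i := Fin.ext (by omega)
    refine ⟨hji ▸ hj, fun k hk => mem_Iic.2 (Fin.le_def.2 ?_)⟩
    have := le_sup (f := fun j : Fin n => j.val + 1) hk
    omega
  · rintro ⟨hi, hS⟩
    refine le_antisymm (Finset.sup_le fun j hj => ?_) (le_sup (f := fun j : Fin n => j.val + 1) hi)
    simpa using Fin.le_def.1 (mem_Iic.1 (hS hj))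

theorem card_filter_card_sup_eq (i : Fin n) (k : ℕ) :
    #{S : Finset (Fin n) | #S = k + 1 ∧ S.sup (fun j => j.val + 1) = i.val + 1} =
      (i : ℕ).choose k := by
  have hcard : #(powersetCard k (Iio i)) = (i : ℕ).choose k := by
    rw [card_powersetCard, Fin.card_Iio]
  rw [← hcard]
  refine card_nbij' (·.erase i) (insert i) ?_ ?_ ?_ ?_
  · intro S hS
    simp only [mem_coe, mem_filter, mem_univ, true_and, sup_val_add_one_eq_iff] at hS
    obtain ⟨hcard, hi, hSi⟩ := hS
    simp only [mem_coe, mem_powersetCard, card_erase_of_mem hi, hcard]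
    refine ⟨fun j hj => ?_, rfl⟩
    obtain ⟨hji, hj⟩ := mem_erase.1 hj
    exact mem_Iio.2 (lt_of_le_of_ne (mem_Iic.1 (hSi hj)) hji)
  · intro T hT
    simp only [mem_coe, mem_powersetCard] at hT
    obtain ⟨hTi, hcard⟩ := hT
    have hi : i ∉ T := fun h => lt_irrefl i (mem_Iio.1 (hTi h))
    simp only [mem_coe, mem_filter, mem_univ, true_and, sup_val_add_one_eq_iff,
      card_insert_of_notMem hi, hcard, mem_insert_self, insert_subset_iff, mem_Iic, le_refl]
    exact fun j hj => mem_Iic.2 (mem_Iio.1 (hTi hj)).le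
  · intro S hS
    simp only [mem_coe, mem_filter, mem_univ, true_and, sup_val_add_one_eq_iff] at hS
    exact insert_erase hS.2.1
  · intro T hT
    simp only [mem_coe, mem_powersetCard] at hT
    exact erase_insert fun h => lt_irrefl i (mem_Iio.1 (hT.1 h))

theorem card_mem_Icc_of_sup_eq {S : Finset (Fin n)} {i : Fin n}
    (h : S.sup (fun j => j.val + 1) = i.val + 1) : #S ∈ Icc 1 (i.val + 1) := by
  obtain ⟨hi, hS⟩ := sup_val_add_one_eq_iff.1 h
  exact mem_Icc.2 ⟨card_pos.2 ⟨i, hi⟩, Fin.card_Iic i ▸ card_le_card hS⟩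

end Counting

section Measure

noncomputable abbrev bernoulliPi (ι : Type*) [Fintype ι] (q : ℝ≥0) (hq : q ≤ 1) :
    Measure (ι → Bool) :=
  Measure.pi fun _ => (PMF.bernoulli q hq).toMeasure

variable {ι : Type*} [Fintype ι] (q : ℝ≥0) (hq : q ≤ 1)

theorem measureReal_bernoulli_singleton (b : Bool) :
    (PMF.bernoulli q hq).toMeasure.real {b} = if b = true then (q : ℝ) else 1 - q := by
  rw [measureReal_def, PMF.toMeasure_apply_singleton _ _ (measurableSet_singleton b),
    PMF.bernoulli_apply]
  cases b <;> simp only [cond_true, cond_false, ENNReal.coe_toReal, NNReal.coe_sub hq,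
    NNReal.coe_one, Bool.false_eq_true, if_true, if_false]

theorem measureReal_bernoulliPi_singleton (ω : ι → Bool) :
    (bernoulliPi ι q hq).real {ω} =
      (q : ℝ) ^ #(probes ω) * (1 - q) ^ (Fintype.card ι - #(probes ω)) := by
  rw [measureReal_def, Measure.pi_singleton, ENNReal.toReal_prod]
  simp only [← measureReal_def, measureReal_bernoulli_singleton, prod_ite, prod_const]
  classical
  rw [← compl_filter, card_compl]
  rfl

variable {n : ℕ}

theorem measureReal_card_eq_sup_eq {m k : ℕ} (hm : m < n) (hk : k ≤ m) :
    (bernoulliPi (Fin n) q hq).real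
        {ω | #(probes ω) = k + 1 ∧ (probes ω).sup (fun i => i.val + 1) = m + 1} =
      q * (1 - q) ^ (n - (m + 1)) * (bernsteinPolynomial ℝ m k).eval (q : ℝ) := by
  classical
  rw [← coe_filter_univ, ← sum_measureReal_singleton]
  rw [sum_congr rfl fun ω hω => by
    rw [measureReal_bernoulliPi_singleton, (mem_filter.1 hω).2.1]]
  have hcount : #{ω : Fin n → Bool |
      #(probes ω) = k + 1 ∧ (probes ω).sup (fun i => i.val + 1) = m + 1} = m.choose k :=
    (card_filter_probes _).trans (card_filter_card_sup_eq ⟨m, hm⟩ k)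
  rw [sum_const, hcount]
  simp only [bernsteinPolynomial, eval_mul, eval_pow, eval_sub, eval_one, eval_X, eval_natCast,
    nsmul_eq_mul, Fintype.card_fin]
  rw [show n - (k + 1) = (m - k) + (n - (m + 1)) by omega, pow_add, pow_succ]
  ring

theorem measureReal_sup_eq_eq_sum {m : ℕ} (hm : m < n) :
    (bernoulliPi (Fin n) q hq).real {ω | (probes ω).sup (fun i => i.val + 1) = m + 1} =
      ∑ c ∈ Icc 1 (m + 1), (bernoulliPi (Fin n) q hq).real
        {ω | #(probes ω) = c ∧ (probes ω).sup (fun i => i.val + 1) = m + 1} := by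
  have hfibers : {ω : Fin n → Bool | (probes ω).sup (fun i => i.val + 1) = m + 1} =
      ⋃ c ∈ Icc 1 (m + 1),
        {ω | #(probes ω) = c ∧ (probes ω).sup (fun i => i.val + 1) = m + 1} := by
    ext ω
    simp only [Set.mem_ofPred_eq, Set.mem_iUnion, exists_prop]
    exact ⟨fun h => ⟨_, card_mem_Icc_of_sup_eq (i := ⟨m, hm⟩) h, rfl, h⟩, fun ⟨_, _, _, h⟩ => h⟩
  rw [hfibers, measureReal_biUnion_finset
    (fun c _ d _ hcd => Set.disjoint_left.2 fun _ h₁ h₂ => hcd (h₁.1.symm.trans h₂.1))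
    fun _ _ => MeasurableSet.of_discrete]

end Measure

theorem sum_Icc_one_eq_sum_range {M : Type*} [AddCommMonoid M] (f : ℕ → M) (l : ℕ) :
    ∑ c ∈ Icc 1 l, f c = ∑ k ∈ range l, f (k + 1) := by
  rw [range_eq_Ico, sum_Ico_add', zero_add, Ico_add_one_right_eq_Icc]

theorem sum_eval_bernsteinPolynomial (m : ℕ) (x : ℝ) :
    ∑ k ∈ range (m + 1), (bernsteinPolynomial ℝ m k).eval x = 1 := by
  simpa [eval_finsetSum] using congrArg (eval x) (bernsteinPolynomial.sum ℝ m)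

theorem sum_mul_eval_bernsteinPolynomial (m : ℕ) (x : ℝ) :
    ∑ k ∈ range (m + 1), (k : ℝ) * (bernsteinPolynomial ℝ m k).eval x = m * x := by
  simpa [eval_finsetSum] using congrArg (eval x) (bernsteinPolynomial.sum_smul ℝ m)

theorem penetration_estimator_unbiased_nnreal {n : ℕ} (q : ℝ≥0) (hq : q ≤ 1) {l : ℕ}
    (hl : 2 ≤ l) (hln : l ≤ n) :
    ∑ c ∈ Icc 1 l, ((c - 1 : ℝ) / (l - 1)) * (bernoulliPi (Fin n) q hq).real
        {ω | #(probes ω) = c ∧ (probes ω).sup (fun i => i.val + 1) = l} =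
      q * (bernoulliPi (Fin n) q hq).real {ω | (probes ω).sup (fun i => i.val + 1) = l} := by
  obtain ⟨m, rfl⟩ : ∃ m, l = m + 1 := ⟨l - 1, by omega⟩
  have hm : (m : ℝ) ≠ 0 := by norm_cast; omega
  set A : ℝ := q * (1 - q) ^ (n - (m + 1))
  set B : ℕ → ℝ := fun k => (bernsteinPolynomial ℝ m k).eval (q : ℝ)
  rw [measureReal_sup_eq_eq_sum q hq (by omega), sum_Icc_one_eq_sum_range,
    sum_Icc_one_eq_sum_range]
  calc ∑ k ∈ range (m + 1), (((k + 1 : ℕ) : ℝ) - 1) / ((m + 1 : ℕ) - 1) *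
          (bernoulliPi (Fin n) q hq).real
            {ω | #(probes ω) = k + 1 ∧ (probes ω).sup (fun i => i.val + 1) = m + 1}
      = A / m * ∑ k ∈ range (m + 1), (k : ℝ) * B k := by
        rw [mul_sum]
        refine sum_congr rfl fun k hk => ?_
        rw [measureReal_card_eq_sup_eq q hq (by omega) (Nat.lt_succ_iff.1 (mem_range.1 hk))]
        push_cast
        ring
    _ = q * (A * ∑ k ∈ range (m + 1), B k) := by
        rw [sum_mul_eval_bernsteinPolynomial, sum_eval_bernsteinPolynomial]
        field_simp
    _ = _ := by
        rw [mul_sum]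
        refine congrArg _ (sum_congr rfl fun k hk => ?_)
        rw [measureReal_card_eq_sup_eq q hq (by omega) (Nat.lt_succ_iff.1 (mem_range.1 hk))]

end ProbeQueue

open ProbeQueue in
theorem penetration_estimator_unbiased_general (n : ℕ) (p : ℝ)
    (hp0 : 0 < p) (hp1 : p < 1) (l : ℕ) (hl : 2 ≤ l) (hln : l ≤ n) :
    let ℙ : Measure (Fin n → Bool) :=
      Measure.pi fun _ : Fin n =>
        (PMF.bernoulli (Real.toNNReal p) (Real.toNNReal_le_one.mpr hp1.le)).toMeasure
    let C : (Fin n → Bool) → ℕ := fun ω => (Finset.univ.filter fun i => ω i = true).card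
    let L : (Fin n → Bool) → ℕ := fun ω =>
      (Finset.univ.filter fun i => ω i = true).sup fun i => i.val + 1
    ∑ c ∈ Finset.Icc 1 l,
        (((c : ℝ) - 1) / ((l : ℝ) - 1)) * (ℙ {ω | C ω = c ∧ L ω = l}).toReal =
      p * (ℙ {ω | L ω = l}).toReal := by
  intro ℙ C L
  have h := penetration_estimator_unbiased_nnreal p.toNNReal
    (Real.toNNReal_le_one.mpr hp1.le) hl hln
  rwa [Real.coe_toNNReal p hp0.le] at h

/-- Unbiasedness of the one-lane penetration-ratio estimator `p̂ = (C−1)/(L−1)`: a queue of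
`n ≥ 2` vehicles, each independently a probe with probability `p`; `C ω` is the number of
probes and `L ω` the position of the last probe (`0` if none).  For every `2 ≤ l ≤ n`,
`∑_{c=1}^{l} ((c−1)/(l−1)) · ℙ(C = c ∧ L = l) = p · ℙ(L = l)`, i.e.
`E[(C−1)/(L−1) | L = l] = p`. -/
theorem penetration_estimator_unbiased (n : ℕ) (hn : 2 ≤ n) (p : ℝ)
    (hp0 : 0 < p) (hp1 : p < 1) (l : ℕ) (hl : 2 ≤ l) (hln : l ≤ n) :
    let ℙ : Measure (Fin n → Bool) :=
      Measure.pi fun _ : Fin n =>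
        (PMF.bernoulli (Real.toNNReal p) (Real.toNNReal_le_one.mpr hp1.le)).toMeasure
    let C : (Fin n → Bool) → ℕ := fun ω => (Finset.univ.filter fun i => ω i = true).card
    let L : (Fin n → Bool) → ℕ := fun ω =>
      (Finset.univ.filter fun i => ω i = true).sup fun i => i.val + 1
    ∑ c ∈ Finset.Icc 1 l,
        (((c : ℝ) - 1) / ((l : ℝ) - 1)) * (ℙ {ω | C ω = c ∧ L ω = l}).toReal =
      p * (ℙ {ω | L ω = l}).toReal :=
  penetration_estimator_unbiased_general n p hp0 hp1 l hl hln
end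

section
/- Let l_n > 0, l_nm > 0, l_m ≥ 0 be reals and let r̄ > 0. For α ∈ [0,1] define f(α, r̄) := |r̄·(l_n + (1−α)·l_nm) − (l_m + α·l_nm)| / (r̄·(l_n + (1−α)·l_nm)), and define α*(r̄) := max(0, min(1, (r̄·l_n + r̄·l_nm − l_m)/(l_nm·(r̄ + 1)))). Then α*(r̄) ∈ [0,1] and for every α ∈ [0,1], f(α*(r̄), r̄) ≤ f(α, r̄); that is, α*(r̄) minimizes f(·, r̄) over [0,1]. -/
/-! The numerator `g α = r̄ (l_n + (1 - α) l_nm) - (l_m + α l_nm)` of the imbalance equals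
`l_nm (r̄ + 1) (β - α)`, where `β` is the unclamped ratio, so it changes sign exactly at `β`.
With `D α = r̄ (l_n + (1 - α) l_nm) > 0`, the signed imbalance `g / D = 1 - (l_m + α l_nm) / D` is
antitone: the nonnegative arrival term grows while `D` shrinks. The absolute value of an antitone
function changing sign at `β` is smallest at the projection of `β` onto the interval, and `α*` is
exactly `Set.projIcc 0 1 β`. -/

open Set

lemma abs_projIcc_le_of_antitoneOn {α E : Type*} [LinearOrder α] [AddCommGroup E] [LinearOrder E]
    [IsOrderedAddMonoid E] {a b β x : α} (hab : a ≤ b) {φ : α → E} (hφ : AntitoneOn φ (Icc a b))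
    (hpos : ∀ y ∈ Icc a b, y ≤ β → 0 ≤ φ y) (hneg : ∀ y ∈ Icc a b, β ≤ y → φ y ≤ 0)
    (hx : x ∈ Icc a b) : |φ (projIcc a b hab β)| ≤ |φ x| := by
  have ha : a ∈ Icc a b := left_mem_Icc.2 hab
  have hb : b ∈ Icc a b := right_mem_Icc.2 hab
  rcases lt_or_ge β a with hβa | hβa
  · rw [projIcc_of_le_left hab hβa.le, abs_of_nonpos (hneg a ha hβa.le),
      abs_of_nonpos (hneg x hx (hβa.le.trans hx.1))]
    exact neg_le_neg (hφ ha hx hx.1)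
  rcases le_or_gt β b with hβb | hβb
  · have hβ : β ∈ Icc a b := ⟨hβa, hβb⟩
    rw [projIcc_of_mem hab hβ, le_antisymm (hneg β hβ le_rfl) (hpos β hβ le_rfl), abs_zero]
    exact abs_nonneg _
  · rw [projIcc_of_right_le hab hβb.le, abs_of_nonneg (hpos b hb hβb.le),
      abs_of_nonneg (hpos x hx (hx.2.trans hβb.le))]
    exact hφ hx hb hx.2

section Imbalance

variable {ln lm lnm r : ℝ}

lemma imbalance_denom_pos (hln : 0 < ln) (hlnm : 0 < lnm) (hr : 0 < r) {α : ℝ}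
    (hα : α ≤ 1) : 0 < r * (ln + (1 - α) * lnm) :=
  mul_pos hr (add_pos_of_pos_of_nonneg hln (mul_nonneg (sub_nonneg.2 hα) hlnm.le))

lemma queue_gap_eq (hlnm : 0 < lnm) (hr : 0 < r) (α : ℝ) :
    r * (ln + (1 - α) * lnm) - (lm + α * lnm)
      = lnm * (r + 1) * ((r * ln + r * lnm - lm) / (lnm * (r + 1)) - α) := by
  field_simp
  ring

lemma antitoneOn_signed_imbalance (hln : 0 < ln) (hlnm : 0 < lnm) (hlm : 0 ≤ lm) (hr : 0 < r) :
    AntitoneOn (fun α => (r * (ln + (1 - α) * lnm) - (lm + α * lnm)) / (r * (ln + (1 - α) * lnm)))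
      (Icc 0 1) := by
  intro x hx y hy hxy
  have hDx := imbalance_denom_pos hln hlnm hr hx.2
  have hDy := imbalance_denom_pos hln hlnm hr hy.2
  simp only [sub_div, div_self hDx.ne', div_self hDy.ne']
  refine sub_le_sub_left (div_le_div₀ ?_ ?_ hDy ?_) 1
  · exact add_nonneg hlm (mul_nonneg hy.1 hlnm.le)
  · gcongr
  · gcongr

end Imbalance

/-- The clamped assignment ratio
`α*(r̄) = max(0, min(1, (r̄ l_n + r̄ l_nm − l_m)/(l_nm (r̄ + 1))))` lies in `[0,1]` and
minimizes the relative queue imbalance `f(·, r̄)` over `[0,1]`. -/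
theorem alphastar_minimizes_imbalance (ln lm lnm r : ℝ) (hln : 0 < ln) (hlnm : 0 < lnm)
    (hlm : 0 ≤ lm) (hr : 0 < r) :
    let f : ℝ → ℝ := fun α =>
      |r * (ln + (1 - α) * lnm) - (lm + α * lnm)| / (r * (ln + (1 - α) * lnm))
    let αstar : ℝ := max 0 (min 1 ((r * ln + r * lnm - lm) / (lnm * (r + 1))))
    (0 ≤ αstar ∧ αstar ≤ 1) ∧ ∀ α : ℝ, 0 ≤ α → α ≤ 1 → f αstar ≤ f α := by
  intro f αstar
  set β := (r * ln + r * lnm - lm) / (lnm * (r + 1))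
  set φ : ℝ → ℝ := fun α =>
    (r * (ln + (1 - α) * lnm) - (lm + α * lnm)) / (r * (ln + (1 - α) * lnm))
  have hαstar : αstar = projIcc 0 1 zero_le_one β := rfl
  have hf : ∀ α ∈ Icc (0 : ℝ) 1, f α = |φ α| := fun α hα => by
    rw [abs_div, abs_of_pos (imbalance_denom_pos hln hlnm hr hα.2)]
  have hscale : 0 < lnm * (r + 1) := by positivity
  have hsign : ∀ α, φ α = lnm * (r + 1) * (β - α) / (r * (ln + (1 - α) * lnm)) :=
    fun α => by rw [← queue_gap_eq hlnm hr]
  refine ⟨(projIcc 0 1 zero_le_one β).2, fun α hα0 hα1 => ?_⟩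
  rw [hf α ⟨hα0, hα1⟩, hf αstar (projIcc 0 1 zero_le_one β).2, hαstar]
  refine abs_projIcc_le_of_antitoneOn zero_le_one (antitoneOn_signed_imbalance hln hlnm hlm hr)
    (fun y hy hyβ => ?_) (fun y hy hβy => ?_) ⟨hα0, hα1⟩ <;>
    have hD := imbalance_denom_pos hln hlnm hr hy.2 <;> rw [hsign]
  · exact div_nonneg (mul_nonneg hscale.le (sub_nonneg.2 hyβ)) hD.le
  · exact div_nonpos_of_nonpos_of_nonneg
      (mul_nonpos_of_nonneg_of_nonpos hscale.le (sub_nonpos.2 hβy)) hD.le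
end

section
/- Let p ∈ (0,1], κ ≥ 0 be reals, and let ν be a probability mass function on the positive integers (ν(0) = 0 and ∑_{l ≥ 1} ν(l) = 1). With the conditional mean m(l) := 1 + p·(l−1) + κ·(p·l + (1−p)) for l ≥ 1, one has ∑_{l ≥ 1} ν(l) · ( m(l)/(1+κ) − (1−p) ) / l = p. That is, choosing the backlog parameter i_c = 1 − p makes the two-lane penetration-ratio estimator p̂ = (c_κ − (1−p))/l_p, with c_κ = c_p/(1+κ), unbiased: E[p̂] = p regardless of the law ν of the last-probe position. -/
/-! The conditional mean factors as `m(l) = (1 + κ) (p l + (1 − p))`, so the debiased count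
`m(l)/(1+κ) − (1−p)` is exactly `p l`. Dividing by `l` leaves `p` for every `l ≥ 1`, and
averaging the constant `p` against the probability `ν` gives `p`. -/

lemma conditionalMean_eq (p κ x : ℝ) :
    1 + p * (x - 1) + κ * (p * x + (1 - p)) = (1 + κ) * (p * x + (1 - p)) := by
  ring

lemma conditionalMean_div_sub_eq {p κ : ℝ} (hκ : 1 + κ ≠ 0) (x : ℝ) :
    (1 + p * (x - 1) + κ * (p * x + (1 - p))) / (1 + κ) - (1 - p) = p * x := by
  rw [conditionalMean_eq, mul_div_cancel_left₀ _ hκ, add_sub_cancel_right]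

lemma mul_mul_natCast_div_natCast {ν : ℕ → ℝ} (hν0 : ν 0 = 0) (p : ℝ) (l : ℕ) :
    ν l * (p * l) / l = ν l * p := by
  rcases Nat.eq_zero_or_pos l with rfl | hl
  · simp [hν0]
  · rw [← mul_assoc, mul_div_cancel_right₀ _ (by positivity)]

theorem estimator_unbiased_with_ic_general (p κ : ℝ) (hκ : 0 ≤ κ)
    (ν : ℕ → ℝ) (hν0 : ν 0 = 0) (hsum : HasSum ν 1) :
    (∑' l : ℕ,
        ν l * ((1 + p * ((l : ℝ) - 1) + κ * (p * (l : ℝ) + (1 - p))) / (1 + κ) - (1 - p)) /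
          (l : ℝ)) = p := by
  have hκ' : 1 + κ ≠ 0 := by positivity
  calc _ = ∑' l : ℕ, ν l * p := tsum_congr fun l => by
          rw [conditionalMean_div_sub_eq hκ', mul_mul_natCast_div_natCast hν0]
    _ = p := by rw [(hsum.mul_right p).tsum_eq, one_mul]

/-- Choosing the backlog parameter `i_c = 1 − p` makes the two-lane penetration-ratio
estimator `p̂ = (c_κ − (1−p))/l_p` unbiased: with the conditional mean
`m(l) = 1 + p(l−1) + κ(pl + (1−p))` of the probe count given last-probe position `l`, one
has `∑_{l ≥ 1} ν(l) (m(l)/(1+κ) − (1−p))/l = p`, regardless of the law `ν` of the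
last-probe position. -/
theorem estimator_unbiased_with_ic (p κ : ℝ) (hp0 : 0 < p) (hp1 : p ≤ 1) (hκ : 0 ≤ κ)
    (ν : ℕ → ℝ) (hν : ∀ l, 0 ≤ ν l) (hν0 : ν 0 = 0) (hsum : HasSum ν 1) :
    (∑' l : ℕ,
        ν l * ((1 + p * ((l : ℝ) - 1) + κ * (p * (l : ℝ) + (1 - p))) / (1 + κ) - (1 - p)) /
          (l : ℝ)) = p :=
  estimator_unbiased_with_ic_general p κ hκ ν hν0 hsum
end
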